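/- For every integer d ≥ 1, the hypercube Q_d satisfies edim(Q_d) ≤ dim(Q_d) ≤ edim(Q_d) + 1. -/

import Mathlib

/-- Distance from a vertex `s` to an edge `e` (as an element of `Sym2 V`):
the minimum of the distances from `s` to the two endpoints of `e`. -/
noncomputable def edgeDist {V : Type*} (G : SimpleGraph V) (e : Sym2 V) (s : V) : ℕ :=
  Sym2.lift ⟨fun x y => min (G.dist x s) (G.dist y s), fun _ _ => min_comm _ _⟩ e

/-- `S` is a metric generator for `G`: every pair of distinct vertices is
distinguished by some element of `S`. -/
def IsMetricGen {V : Type*} (G : SimpleGraph V) (S : Set V) : Prop :=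
  ∀ u v : V, u ≠ v → ∃ s ∈ S, G.dist s u ≠ G.dist s v

/-- `S` is an edge metric generator for `G`: every pair of distinct edges is
distinguished by some element of `S`. -/
def IsEdgeMetricGen {V : Type*} (G : SimpleGraph V) (S : Set V) : Prop :=
  ∀ e₁ ∈ G.edgeSet, ∀ e₂ ∈ G.edgeSet, e₁ ≠ e₂ → ∃ s ∈ S, edgeDist G e₁ s ≠ edgeDist G e₂ s

/-- Distance from a vertex `s` to a mixed element (a vertex or an edge). -/
noncomputable def mixedDist {V : Type*} (G : SimpleGraph V) (a : V ⊕ Sym2 V) (s : V) : ℕ :=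
  Sum.elim (fun w => G.dist s w) (fun e => edgeDist G e s) a

/-- A mixed element is valid if it is a vertex, or an actual edge of `G`. -/
def IsMixedElem {V : Type*} (G : SimpleGraph V) (a : V ⊕ Sym2 V) : Prop :=
  Sum.elim (fun _ => True) (fun e => e ∈ G.edgeSet) a

/-- `S` is a mixed metric generator for `G`: every pair of distinct elements of
`V(G) ∪ E(G)` is distinguished by some element of `S`. -/
def IsMixedMetricGen {V : Type*} (G : SimpleGraph V) (S : Set V) : Prop :=
  ∀ a b : V ⊕ Sym2 V, IsMixedElem G a → IsMixedElem G b → a ≠ b →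
    ∃ s ∈ S, mixedDist G a s ≠ mixedDist G b s

/-- The metric dimension: minimum cardinality of a metric generator. -/
noncomputable def metricDim {V : Type*} [Fintype V] (G : SimpleGraph V) : ℕ :=
  sInf {n | ∃ S : Finset V, S.card = n ∧ IsMetricGen G ↑S}

/-- The edge metric dimension: minimum cardinality of an edge metric generator. -/
noncomputable def edgeMetricDim {V : Type*} [Fintype V] (G : SimpleGraph V) : ℕ :=
  sInf {n | ∃ S : Finset V, S.card = n ∧ IsEdgeMetricGen G ↑S}

/-- The mixed metric dimension: minimum cardinality of a mixed metric generator. -/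
noncomputable def mixedMetricDim {V : Type*} [Fintype V] (G : SimpleGraph V) : ℕ :=
  sInf {n | ∃ S : Finset V, S.card = n ∧ IsMixedMetricGen G ↑S}

/-- The hypercube `Q_d`: vertices are binary vectors of length `d`, with two
vertices adjacent iff they differ in exactly one coordinate. -/
def cube (d : ℕ) : SimpleGraph (Fin d → Bool) where
  Adj u v := hammingDist u v = 1
  symm := ⟨fun u v (h : hammingDist u v = 1) => show hammingDist v u = 1 by simp only [hammingDist_comm] at h ⊢; exact h⟩
  loopless := ⟨fun u (h : hammingDist u u = 1) => by simp only [hammingDist_self] at h; exact one_ne_zero h.symm⟩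

/-!
Any metric generator of a connected bipartite graph is an edge metric generator: of two distinct
edges choose distinct endpoints `a`, `x` of the same colour; a vertex `s` separating them sees them
at distances of equal parity, hence at least `2` apart, and the other endpoints are within `1`.

Conversely, two vertices of `Q_d` that an edge metric generator `S` does not separate must differ
in every coordinate: if they agreed in coordinate `i`, flipping `i` would move both in the same
way relative to every `s ∈ S`, so the two edges in direction `i` would not be separated. Such
antipodal `u`, `v` satisfy `d(s, u) + d(s, v) = d` for all `s`, so they are at distance `d / 2`
from any `s₀ ∈ S`, and by parity at different distances from a neighbour of `s₀`.
-/

section Generators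

open SimpleGraph

variable {V : Type*} {G : SimpleGraph V}

lemma edgeDist_mk (x y s : V) : edgeDist G s(x, y) s = min (G.dist x s) (G.dist y s) := rfl

lemma SimpleGraph.Connected.edgeDist_eq_zero_iff (hG : G.Connected) {e : Sym2 V} {s : V} :
    edgeDist G e s = 0 ↔ s ∈ e := by
  induction e using Sym2.ind with
  | _ x y =>
    rw [edgeDist_mk, Nat.min_eq_zero_iff, hG.dist_eq_zero_iff, hG.dist_eq_zero_iff, Sym2.mem_iff]
    grind

lemma SimpleGraph.Connected.isMetricGen_univ (hG : G.Connected) : IsMetricGen G Set.univ :=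
  fun u v huv => ⟨u, trivial, by rw [dist_self]; exact (hG.pos_dist_of_ne huv).ne⟩

lemma SimpleGraph.Connected.isEdgeMetricGen_univ (hG : G.Connected) :
    IsEdgeMetricGen G Set.univ := by
  intro e₁ he₁ e₂ _ hne
  induction e₁ using Sym2.ind with | _ a b =>
  have hab : a ≠ b := G.ne_of_adj he₁
  obtain ⟨s, hs₁, hs₂⟩ : ∃ s ∈ s(a, b), s ∉ e₂ := by
    by_contra! h
    exact hne ((Sym2.mem_and_mem_iff hab).1 ⟨h a (Sym2.mem_mk_left a b),
      h b (Sym2.mem_mk_right a b)⟩).symm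
  refine ⟨s, trivial, ?_⟩
  rw [hG.edgeDist_eq_zero_iff.2 hs₁, ne_comm, Ne, hG.edgeDist_eq_zero_iff]
  exact hs₂

lemma SimpleGraph.Coloring.even_dist_iff (c : G.Coloring Bool) {u v : V} (h : G.Reachable u v) :
    Even (G.dist u v) ↔ (c u ↔ c v) := by
  obtain ⟨p, hp⟩ := h.exists_walk_length_eq_dist
  rw [← hp, c.even_length_iff_congr]

lemma edgeDist_ne_of_color_eq_of_dist_ne (hG : G.Connected) (c : G.Coloring Bool) {a b x y s : V}
    (hab : G.Adj a b) (hxy : G.Adj x y) (hc : c a = c x) (hne : G.dist s a ≠ G.dist s x) :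
    edgeDist G s(a, b) s ≠ edgeDist G s(x, y) s := by
  have hpar : Even (G.dist s a) ↔ Even (G.dist s x) := by
    rw [c.even_dist_iff (hG s a), c.even_dist_iff (hG s x), hc]
  have hb := hab.diff_dist_adj (u := s)
  have hy := hxy.diff_dist_adj (u := s)
  simp only [Nat.even_iff] at hpar
  rw [edgeDist_mk, edgeDist_mk, G.dist_comm (u := a), G.dist_comm (u := b), G.dist_comm (u := x),
    G.dist_comm (u := y)]
  omega

lemma exists_edgeDist_ne_of_color_eq (hG : G.Connected) (c : G.Coloring Bool) {S : Set V}
    (hS : IsMetricGen G S) {a b x y : V} (hab : G.Adj a b) (hxy : G.Adj x y) (hc : c a = c x)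
    (hne : s(a, b) ≠ s(x, y)) : ∃ s ∈ S, edgeDist G s(a, b) s ≠ edgeDist G s(x, y) s := by
  by_cases hax : a = x
  · subst hax
    have hby : b ≠ y := by rintro rfl; exact hne rfl
    have hc' : c b = c y := by
      rw [Bool.eq_not.2 (c.valid hab).symm, Bool.eq_not.2 (c.valid hxy).symm]
    obtain ⟨s, hs, hsep⟩ := hS b y hby
    refine ⟨s, hs, ?_⟩
    rw [Sym2.eq_swap, Sym2.eq_swap (a := a)]
    exact edgeDist_ne_of_color_eq_of_dist_ne hG c hab.symm hxy.symm hc' hsep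
  · obtain ⟨s, hs, hsep⟩ := hS a x hax
    exact ⟨s, hs, edgeDist_ne_of_color_eq_of_dist_ne hG c hab hxy hc hsep⟩

theorem IsMetricGen.isEdgeMetricGen (hG : G.Connected) (hbip : G.IsBipartite) {S : Set V}
    (hS : IsMetricGen G S) : IsEdgeMetricGen G S := by
  obtain ⟨c⟩ := hbip
  let c' : G.Coloring Bool := G.recolorOfEquiv finTwoEquiv c
  intro e₁ he₁ e₂ he₂ hne
  induction e₁ using Sym2.ind with | _ u v =>
  induction e₂ using Sym2.ind with | _ x y =>
  by_cases hc : c' u = c' x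
  · exact exists_edgeDist_ne_of_color_eq hG c' hS he₁ he₂ hc hne
  · have hc' : c' u = c' y := by
      rw [Bool.eq_not.2 hc, Bool.eq_not.2 (c'.valid he₂).symm]
    rw [Sym2.eq_swap (a := x)] at hne ⊢
    exact exists_edgeDist_ne_of_color_eq hG c' hS he₁ (G.adj_symm he₂) hc' hne

variable [Fintype V]

lemma metricDim_le_card {S : Finset V} (hS : IsMetricGen G S) : metricDim G ≤ S.card :=
  Nat.sInf_le ⟨S, rfl, hS⟩

lemma edgeMetricDim_le_card {S : Finset V} (hS : IsEdgeMetricGen G S) :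
    edgeMetricDim G ≤ S.card :=
  Nat.sInf_le ⟨S, rfl, hS⟩

lemma SimpleGraph.Connected.exists_isMetricGen_card_eq (hG : G.Connected) :
    ∃ S : Finset V, S.card = metricDim G ∧ IsMetricGen G S :=
  Nat.sInf_mem (s := {n | ∃ S : Finset V, S.card = n ∧ IsMetricGen G S})
    ⟨_, Finset.univ, rfl, by simpa using hG.isMetricGen_univ⟩

lemma SimpleGraph.Connected.exists_isEdgeMetricGen_card_eq (hG : G.Connected) :
    ∃ S : Finset V, S.card = edgeMetricDim G ∧ IsEdgeMetricGen G S :=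
  Nat.sInf_mem (s := {n | ∃ S : Finset V, S.card = n ∧ IsEdgeMetricGen G S})
    ⟨_, Finset.univ, rfl, by simpa using hG.isEdgeMetricGen_univ⟩

end Generators

section Hamming

variable {ι β : Type*} [Fintype ι]

lemma hammingDist_eq_sum_ite [DecidableEq β] (u v : ι → β) :
    hammingDist u v = ∑ i, if u i ≠ v i then 1 else 0 := by
  simp [hammingDist, Finset.card_filter]

lemma hammingDist_update_add [DecidableEq ι] [DecidableEq β] (u v : ι → β) (i : ι) (b : β) :
    hammingDist (Function.update u i b) v + (if u i ≠ v i then 1 else 0)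
      = hammingDist u v + (if b ≠ v i then 1 else 0) := by
  rw [hammingDist_eq_sum_ite, hammingDist_eq_sum_ite,
    ← Finset.add_sum_erase _ _ (Finset.mem_univ i),
    ← Finset.add_sum_erase _ _ (Finset.mem_univ i),
    Finset.sum_congr rfl fun j hj => by rw [Function.update_of_ne (Finset.ne_of_mem_erase hj)],
    Function.update_self]
  omega

lemma even_hammingDist_add (u v w : ι → Bool) :
    Even (hammingDist u v + hammingDist v w + hammingDist u w) := by
  rw [hammingDist_eq_sum_ite, hammingDist_eq_sum_ite, hammingDist_eq_sum_ite,
    ← Finset.sum_add_distrib, ← Finset.sum_add_distrib]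
  refine Finset.sum_induction _ Even (fun _ _ => Even.add) ⟨0, rfl⟩ fun i _ => ?_
  cases u i <;> cases v i <;> cases w i <;> decide

lemma hammingDist_add_hammingDist_of_forall_ne (s : ι → Bool) {u v : ι → Bool}
    (h : ∀ i, u i ≠ v i) : hammingDist s u + hammingDist s v = Fintype.card ι := by
  rw [hammingDist_eq_sum_ite, hammingDist_eq_sum_ite, ← Finset.sum_add_distrib,
    ← Finset.card_univ, Finset.card_eq_sum_ones]
  refine Finset.sum_congr rfl fun i _ => ?_
  have hi := h i
  revert hi
  cases s i <;> cases u i <;> cases v i <;> simp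

variable [DecidableEq ι]

def flipCoord (u : ι → Bool) (i : ι) : ι → Bool := Function.update u i (!u i)

lemma hammingDist_flipCoord_of_eq {u s : ι → Bool} {i : ι} (h : s i = u i) :
    hammingDist (flipCoord u i) s = hammingDist u s + 1 := by
  simpa [flipCoord, h] using hammingDist_update_add u s i (!u i)

lemma hammingDist_flipCoord_of_ne {u s : ι → Bool} {i : ι} (h : s i ≠ u i) :
    hammingDist (flipCoord u i) s + 1 = hammingDist u s := by
  have := hammingDist_update_add u s i (!u i)
  rw [Bool.eq_not.2 h] at this
  simpa [flipCoord, Ne.symm h] using this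

lemma hammingDist_flipCoord_self (u : ι → Bool) (i : ι) :
    hammingDist u (flipCoord u i) = 1 := by
  rw [hammingDist_comm, hammingDist_flipCoord_of_eq rfl, hammingDist_self]

end Hamming

section Cube

variable {d : ℕ}

lemma cube_adj_flipCoord (u : Fin d → Bool) (i : Fin d) : (cube d).Adj u (flipCoord u i) :=
  hammingDist_flipCoord_self u i

lemma exists_cube_walk_length_eq_hammingDist (u v : Fin d → Bool) :
    ∃ p : (cube d).Walk u v, p.length = hammingDist u v := by
  induction h : hammingDist u v generalizing u with
  | zero =>
    obtain rfl := hammingDist_eq_zero.1 h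
    exact ⟨.nil, rfl⟩
  | succ n ih =>
    have huv : hammingDist u v ≠ 0 := by omega
    obtain ⟨i, hi⟩ := Function.ne_iff.1 (hammingDist_ne_zero.1 huv)
    obtain ⟨p, hp⟩ := ih (flipCoord u i) <| by
      have := hammingDist_flipCoord_of_ne (Ne.symm hi)
      omega
    exact ⟨.cons (cube_adj_flipCoord u i) p, by simp [hp]⟩

lemma hammingDist_le_length {u v : Fin d → Bool} (p : (cube d).Walk u v) :
    hammingDist u v ≤ p.length := by
  induction p with
  | nil => simp
  | @cons a b c hab p ih =>
    have h₁ : hammingDist a b = 1 := hab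
    have h₂ := hammingDist_triangle a b c
    rw [SimpleGraph.Walk.length_cons]
    omega

lemma cube_dist (u v : Fin d → Bool) : (cube d).dist u v = hammingDist u v := by
  obtain ⟨p, hp⟩ := exists_cube_walk_length_eq_hammingDist u v
  refine le_antisymm (hp ▸ SimpleGraph.dist_le p) ?_
  obtain ⟨q, hq⟩ := p.reachable.exists_walk_length_eq_dist
  exact hq ▸ hammingDist_le_length q

lemma cube_connected (d : ℕ) : (cube d).Connected where
  preconnected u v := (exists_cube_walk_length_eq_hammingDist u v).elim fun p _ => p.reachable

lemma cube_isBipartite (d : ℕ) : (cube d).IsBipartite := by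
  let c : (cube d).Coloring Bool := SimpleGraph.Coloring.mk
    (fun u => decide (Even (hammingDist u fun _ => false))) fun {u v} huv => by
      have h : hammingDist u v = 1 := huv
      have := even_hammingDist_add u v fun _ => false
      simp only [h, ne_eq, decide_eq_decide] at this ⊢
      grind
  simpa using c.colorable

lemma edgeDist_cube_flipCoord (u s : Fin d → Bool) (i : Fin d) :
    edgeDist (cube d) s(u, flipCoord u i) s =
      if s i = u i then hammingDist u s else hammingDist u s - 1 := by
  rw [edgeDist_mk, cube_dist, cube_dist]
  split_ifs with h
  · rw [hammingDist_flipCoord_of_eq h]; omega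
  · have := hammingDist_flipCoord_of_ne h; omega

lemma IsEdgeMetricGen.cube_ne_of_forall_dist_eq {S : Set (Fin d → Bool)}
    (hS : IsEdgeMetricGen (cube d) S) {u v : Fin d → Bool} (huv : u ≠ v)
    (hdist : ∀ s ∈ S, hammingDist s u = hammingDist s v) (i : Fin d) : u i ≠ v i := by
  intro hi
  have hne : s(u, flipCoord u i) ≠ s(v, flipCoord v i) := by
    rw [Ne, Sym2.eq_iff]
    rintro (⟨rfl, -⟩ | ⟨rfl, -⟩)
    · exact huv rfl
    · simp [flipCoord] at hi
  obtain ⟨s, hs, hsep⟩ := hS _ (cube_adj_flipCoord u i) _ (cube_adj_flipCoord v i) hne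
  rw [edgeDist_cube_flipCoord, edgeDist_cube_flipCoord, hi, hammingDist_comm u,
    hammingDist_comm v, hdist s hs] at hsep
  exact hsep rfl

lemma IsEdgeMetricGen.cube_isMetricGen_insert {S : Set (Fin d → Bool)}
    (hS : IsEdgeMetricGen (cube d) S) {s₀ w : Fin d → Bool} (hs₀ : s₀ ∈ S)
    (hw : (cube d).Adj s₀ w) : IsMetricGen (cube d) (insert w S) := by
  intro u v huv
  simp only [cube_dist]
  by_cases hsep : ∃ s ∈ S, hammingDist s u ≠ hammingDist s v
  · obtain ⟨s, hs, h⟩ := hsep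
    exact ⟨s, Set.mem_insert_of_mem w hs, h⟩
  push Not at hsep
  have hanti := hS.cube_ne_of_forall_dist_eq huv hsep
  have hs₀' := hammingDist_add_hammingDist_of_forall_ne s₀ hanti
  have hw' := hammingDist_add_hammingDist_of_forall_ne w hanti
  have hpar := Nat.even_iff.1 (even_hammingDist_add s₀ w u)
  have hadj : hammingDist s₀ w = 1 := hw
  have := hsep s₀ hs₀
  exact ⟨w, Set.mem_insert w S, by omega⟩

lemma cube_isMetricGen_singleton (hd : d ≤ 1) (w : Fin d → Bool) :
    IsMetricGen (cube d) {w} := by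
  intro u v huv
  have hle : hammingDist u v ≤ 1 := hammingDist_le_card_fintype.trans (by simpa using hd)
  have hpos := hammingDist_pos.2 huv
  have hpar := Nat.even_iff.1 (even_hammingDist_add w u v)
  exact ⟨w, rfl, by rw [cube_dist, cube_dist]; omega⟩

lemma cube_not_isEdgeMetricGen_empty (hd : 2 ≤ d) : ¬IsEdgeMetricGen (cube d) ∅ := by
  intro h
  let z : Fin d → Bool := fun _ => false
  have hne : s(z, flipCoord z ⟨0, by omega⟩) ≠ s(z, flipCoord z ⟨1, by omega⟩) := by
    rw [Ne, Sym2.congr_right]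
    intro h01
    simpa [z, flipCoord, Function.update_apply, Fin.ext_iff] using congrFun h01 ⟨0, by omega⟩
  obtain ⟨s, hs, -⟩ := h _ (cube_adj_flipCoord z _) _ (cube_adj_flipCoord z _) hne
  exact hs

end Cube

theorem stmt7_general (d : ℕ) :
    edgeMetricDim (cube d) ≤ metricDim (cube d) ∧
      metricDim (cube d) ≤ edgeMetricDim (cube d) + 1 := by
  obtain ⟨Sm, hSm_card, hSm⟩ := (cube_connected d).exists_isMetricGen_card_eq
  obtain ⟨Se, hSe_card, hSe⟩ := (cube_connected d).exists_isEdgeMetricGen_card_eq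
  refine ⟨hSm_card ▸ edgeMetricDim_le_card
    (IsMetricGen.isEdgeMetricGen (cube_connected d) (cube_isBipartite d) hSm), ?_⟩
  rcases le_or_gt d 1 with hd | hd
  · calc metricDim (cube d) ≤ ({fun _ => false} : Finset (Fin d → Bool)).card :=
          metricDim_le_card (by simpa using cube_isMetricGen_singleton hd _)
      _ ≤ edgeMetricDim (cube d) + 1 := by simp
  · obtain ⟨s₀, hs₀⟩ : Se.Nonempty := Finset.nonempty_iff_ne_empty.2 <| by
      rintro rfl
      exact cube_not_isEdgeMetricGen_empty hd (by simpa using hSe)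
    let w := flipCoord s₀ ⟨0, by omega⟩
    calc metricDim (cube d) ≤ (insert w Se).card :=
          metricDim_le_card <| by
            simpa using hSe.cube_isMetricGen_insert hs₀ (cube_adj_flipCoord s₀ _)
      _ ≤ Se.card + 1 := Finset.card_insert_le w Se
      _ = edgeMetricDim (cube d) + 1 := by rw [hSe_card]

/-- For every `d ≥ 1`, `edim(Q_d) ≤ dim(Q_d) ≤ edim(Q_d) + 1`. -/
theorem stmt7 (d : ℕ) (hd : 1 ≤ d) :
    edgeMetricDim (cube d) ≤ metricDim (cube d) ∧
      metricDim (cube d) ≤ edgeMetricDim (cube d) + 1 :=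
  stmt7_general d
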